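/- Let f : 𝕋 → (0,∞) be a potential such that log f is 3-equispacing. Then the 3-point diagonal lattice {(0,0), (1/3,1/3), (2/3,2/3)} ⊂ 𝕋² (equal up to torus symmetries to the 3-point Fibonacci lattice) satisfies E_F(Y) ≥ E_F({(0,0),(1/3,1/3),(2/3,2/3)}) = 6 f(1/3)² for every 3-point configuration Y ⊆ 𝕋². -/

import Mathlib

open Finset Real

/-- Pairwise interaction energy of `N` points on the circle `𝕋 = ℝ/ℤ ≃ [0,1)`:
`E_g(y^0,…,y^{N-1}) = Σ_{k ≠ ℓ} g(y^k − y^ℓ)`. -/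
noncomputable def energy1 {N : ℕ} (g : ℝ → ℝ) (y : Fin N → ℝ) : ℝ :=
  ∑ k : Fin N, ∑ ℓ : Fin N, if k = ℓ then 0 else g (y k - y ℓ)

/-- Tensor product energy of `N` points in `𝕋² ≃ [0,1)²`:
`E_F(Y) = Σ_{k ≠ ℓ} ∏_i f(y_i^k − y_i^ℓ)`. -/
noncomputable def energyProd {N d : ℕ} (f : ℝ → ℝ) (y : Fin N → Fin d → ℝ) : ℝ :=
  ∑ k : Fin N, ∑ ℓ : Fin N, if k = ℓ then 0 else ∏ i : Fin d, f (y k i - y ℓ i)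

/-- A (1-periodic, even) function `g` is `N`-equispacing if the `N` equispaced
points minimize the energy `E_g` on the circle. -/
def NEquispacing (N : ℕ) (g : ℝ → ℝ) : Prop :=
  ∀ y : Fin N → ℝ, (∀ k, y k ∈ Set.Ico (0 : ℝ) 1) →
    energy1 g y ≥ energy1 g (fun k : Fin N => ((k : ℕ) : ℝ) / N)

/-- The 3-point diagonal lattice `{(0,0), (1/3,1/3), (2/3,2/3)} ⊂ 𝕋²`, equal
up to torus symmetries to the 3-point Fibonacci lattice. -/
noncomputable def diagonal3 : Fin 3 → Fin 2 → ℝ :=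
  ![![0, 0], ![1/3, 1/3], ![2/3, 2/3]]

/-!
Each term of `E_F(Y)` is `exp (∑ᵢ log f (yᵢᵏ - yᵢˡ))`, so Jensen's inequality for `exp` over the
`N(N-1)` ordered pairs bounds `E_F(Y)` below by `N(N-1) · exp (∑ᵢ E_{log f}(Yᵢ) / (N(N-1)))`, where
`Yᵢ` is the `i`-th coordinate projection of `Y`. As `log f` is `N`-equispacing, every `E_{log f}(Yᵢ)`
is at least its value at the equispaced points. For `N = 3`, `d = 2` this lower bound is
`6 f(1/3)²`, attained by the diagonal lattice, all of whose coordinate differences are `±1/3, ±2/3`.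
-/
lemma card_mul_exp_mean_le_sum_exp {ι : Type*} (s : Finset ι) (x : ι → ℝ) :
    (#s : ℝ) * exp ((∑ i ∈ s, x i) / #s) ≤ ∑ i ∈ s, exp (x i) := by
  rcases s.eq_empty_or_nonempty with rfl | hs
  · simp
  have hcard : (0 : ℝ) < #s := by exact_mod_cast hs.card_pos
  have jensen := convexOn_exp.map_sum_le (t := s) (w := fun _ => (#s : ℝ)⁻¹) (p := x)
    (fun _ _ => by positivity) (by simp [hcard.ne']) (fun _ _ => Set.mem_univ _)
  simp only [smul_eq_mul, ← Finset.mul_sum] at jensen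
  rw [div_eq_inv_mul]
  calc (#s : ℝ) * exp ((#s : ℝ)⁻¹ * ∑ i ∈ s, x i)
      ≤ #s * ((#s : ℝ)⁻¹ * ∑ i ∈ s, exp (x i)) := by gcongr
    _ = ∑ i ∈ s, exp (x i) := by field_simp

lemma sum_sum_ite_eq_sum_offDiag {α M : Type*} [Fintype α] [DecidableEq α] [AddCommMonoid M]
    (F : α → α → M) :
    (∑ k, ∑ ℓ, if k = ℓ then 0 else F k ℓ) = ∑ p ∈ (univ : Finset α).offDiag, F p.1 p.2 := by
  have hoff : (univ : Finset α).offDiag = (univ ×ˢ univ).filter (fun p => ¬p.1 = p.2) := by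
    ext; simp
  rw [hoff, Finset.sum_filter, Finset.sum_product]
  simp only [ite_not]

section LogEquispacing

variable {N d : ℕ} {f : ℝ → ℝ}

lemma energyProd_eq_sum_exp_sum_log (hf : ∀ t, 0 < f t) (y : Fin N → Fin d → ℝ) :
    energyProd f y =
      ∑ p ∈ (univ : Finset (Fin N)).offDiag, exp (∑ i, log (f (y p.1 i - y p.2 i))) := by
  rw [energyProd, sum_sum_ite_eq_sum_offDiag]
  simp only [exp_sum, exp_log (hf _)]

lemma sum_offDiag_sum_log_eq_sum_energy1 (y : Fin N → Fin d → ℝ) :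
    ∑ p ∈ (univ : Finset (Fin N)).offDiag, ∑ i, log (f (y p.1 i - y p.2 i)) =
      ∑ i, energy1 (fun t => log (f t)) (fun k => y k i) := by
  simp only [energy1, sum_sum_ite_eq_sum_offDiag]
  exact Finset.sum_comm

lemma energyProd_ge_exp_energy1 (hf : ∀ t, 0 < f t) (y : Fin N → Fin d → ℝ) :
    energyProd f y ≥ ((N * N - N : ℕ) : ℝ) *
      exp ((∑ i, energy1 (fun t => log (f t)) (fun k => y k i)) / ((N * N - N : ℕ) : ℝ)) := by
  have hcard : #(univ : Finset (Fin N)).offDiag = N * N - N := by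
    rw [offDiag_card, card_univ, Fintype.card_fin]
  rw [energyProd_eq_sum_exp_sum_log hf, ← sum_offDiag_sum_log_eq_sum_energy1, ← hcard]
  exact card_mul_exp_mean_le_sum_exp _ _

theorem energyProd_ge_of_log_equispacing (hf : ∀ t, 0 < f t)
    (hequi : NEquispacing N (fun t => log (f t)))
    (y : Fin N → Fin d → ℝ) (hy : ∀ k i, y k i ∈ Set.Ico (0 : ℝ) 1) :
    energyProd f y ≥ ((N * N - N : ℕ) : ℝ) *
      exp (d * energy1 (fun t => log (f t)) (fun k : Fin N => ((k : ℕ) : ℝ) / N) /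
        ((N * N - N : ℕ) : ℝ)) := by
  refine le_trans ?_ (energyProd_ge_exp_energy1 hf y)
  have hsum : (d : ℝ) * energy1 (fun t => log (f t)) (fun k : Fin N => ((k : ℕ) : ℝ) / N) ≤
      ∑ i, energy1 (fun t => log (f t)) (fun k => y k i) := by
    simpa using Finset.sum_le_sum fun i (_ : i ∈ univ) => hequi (fun k => y k i) (hy · i)
  gcongr

end LogEquispacing

lemma Function.Periodic.apply_neg_of_symm {f : ℝ → ℝ} (hper : Function.Periodic f 1)
    (hsymm : ∀ t, f t = f (1 - t)) (t : ℝ) : f (-t) = f t := by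
  rw [hsymm t, ← hper (-t), neg_add_eq_sub]

section ThreePoints

variable {f : ℝ → ℝ}

lemma energy1_log_equispaced_three (hneg : ∀ t, f (-t) = f t) (h23 : f (2/3) = f (1/3)) :
    energy1 (fun t => log (f t)) (fun k : Fin 3 => ((k : ℕ) : ℝ) / (3 : ℕ)) =
      6 * log (f (1/3)) := by
  simp only [energy1, Fin.sum_univ_three]
  norm_num [hneg, h23, Fin.ext_iff]
  ring

lemma energyProd_diagonal3 (hneg : ∀ t, f (-t) = f t) (h23 : f (2/3) = f (1/3)) :
    energyProd f diagonal3 = 6 * f (1/3) ^ 2 := by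
  simp only [energyProd, diagonal3, Fin.sum_univ_three, Fin.prod_univ_two]
  norm_num [hneg, h23, Fin.ext_iff, Matrix.cons_val_two, Matrix.tail_cons, Matrix.head_cons]
  ring

end ThreePoints

/-- Universal optimality of the 3-point Fibonacci/diagonal lattice: if
`f : 𝕋 → (0,∞)` is a potential with `log f` 3-equispacing, then the diagonal
lattice minimizes the tensor product energy `E_F` among all 3-point
configurations in `𝕋²`, and its energy equals `6 f(1/3)²`. -/
theorem diagonal3_minimizes (f : ℝ → ℝ)
    (hf_pos : ∀ t, 0 < f t)
    (hf_per : Function.Periodic f 1)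
    (hf_even : ∀ t, f t = f (1 - t))
    (hequi : NEquispacing 3 (fun t => Real.log (f t))) :
    energyProd f diagonal3 = 6 * f (1/3) ^ 2 ∧
    ∀ y : Fin 3 → Fin 2 → ℝ, (∀ k i, y k i ∈ Set.Ico (0 : ℝ) 1) →
      energyProd f y ≥ energyProd f diagonal3 := by
  have hneg := hf_per.apply_neg_of_symm hf_even
  have h23 : f (2/3) = f (1/3) := by
    have h := hf_even (1/3)
    norm_num at h
    exact h.symm
  have hdiag := energyProd_diagonal3 hneg h23
  refine ⟨hdiag, fun y hy => ?_⟩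
  have hbound := energyProd_ge_of_log_equispacing hf_pos hequi y hy
  rw [energy1_log_equispaced_three hneg h23] at hbound
  have hlower : ((3 * 3 - 3 : ℕ) : ℝ) * exp ((2 : ℕ) * (6 * log (f (1/3))) / (3 * 3 - 3 : ℕ)) =
      6 * f (1/3) ^ 2 := by
    rw [← exp_log (pow_pos (hf_pos (1/3)) 2), log_pow]
    norm_num
    ring_nf
  rwa [hdiag, ← hlower]
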